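/- Let g be a smooth metric on a chart U ⊆ ℝ⁴, invertible at every point, and π a smooth covector field. Let Γ^λ_{νρ} = γ^λ_{νρ} + N^λ_{νρ} be the Schrödinger connection, where γ is the Levi-Civita connection of g and N^μ_{νρ} = −π^μ g_{νρ} + (1/2) π_ρ δ^μ_ν + (1/2) π_ν δ^μ_ρ with π^μ = g^{μσ} π_σ. Then the Ricci tensor of Γ satisfies R_{ρν} = R∘_{ρν} − g_{ρν} ∇∘_α π^α + (1/2) ∇∘_ρ π_ν − ∇∘_ν π_ρ − (1/2) (π_σ π^σ) g_{ρν} − (1/4) π_ρ π_ν at every point of U, where R∘ is the Ricci tensor of γ. -/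

import Mathlib

open scoped BigOperators

/-- Partial derivative of a scalar function on ℝ⁴ in the μ-th coordinate direction. -/
noncomputable def pd (f : (Fin 4 → ℝ) → ℝ) (μ : Fin 4) (x : Fin 4 → ℝ) : ℝ :=
  fderiv ℝ f x (Pi.single μ 1)

/-- Levi-Civita (Christoffel) coefficients
`γ^λ_{μν} = (1/2) g^{λσ}(∂_μ g_{σν} + ∂_ν g_{σμ} − ∂_σ g_{μν})`. -/
noncomputable def christoffel (g : (Fin 4 → ℝ) → Matrix (Fin 4) (Fin 4) ℝ)
    (l μ ν : Fin 4) (x : Fin 4 → ℝ) : ℝ :=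
  (1/2) * ∑ σ, (g x)⁻¹ l σ *
    (pd (fun y => g y σ ν) μ x + pd (fun y => g y σ μ) ν x - pd (fun y => g y μ ν) σ x)

/-- Raised components `π^μ = g^{μσ} π_σ` of a covector field. -/
noncomputable def piUp (g : (Fin 4 → ℝ) → Matrix (Fin 4) (Fin 4) ℝ)
    (π : (Fin 4 → ℝ) → Fin 4 → ℝ) (μ : Fin 4) (x : Fin 4 → ℝ) : ℝ :=
  ∑ σ, (g x)⁻¹ μ σ * π x σ

/-- Schrödinger distortion `N^μ_{νρ} = −π^μ g_{νρ} + (1/2) π_ρ δ^μ_ν + (1/2) π_ν δ^μ_ρ`. -/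
noncomputable def schN (g : (Fin 4 → ℝ) → Matrix (Fin 4) (Fin 4) ℝ)
    (π : (Fin 4 → ℝ) → Fin 4 → ℝ) (μ ν ρ : Fin 4) (x : Fin 4 → ℝ) : ℝ :=
  -(piUp g π μ x) * g x ν ρ
    + (1/2) * π x ρ * (if μ = ν then 1 else 0)
    + (1/2) * π x ν * (if μ = ρ then 1 else 0)

/-- Dual Schrödinger distortion
`N*^μ_{νρ} = −(1/2) π^μ g_{νρ} − (1/2) π_ρ δ^μ_ν + π_ν δ^μ_ρ`. -/
noncomputable def schNstar (g : (Fin 4 → ℝ) → Matrix (Fin 4) (Fin 4) ℝ)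
    (π : (Fin 4 → ℝ) → Fin 4 → ℝ) (μ ν ρ : Fin 4) (x : Fin 4 → ℝ) : ℝ :=
  -(1/2) * piUp g π μ x * g x ν ρ
    - (1/2) * π x ρ * (if μ = ν then 1 else 0)
    + π x ν * (if μ = ρ then 1 else 0)

/-- Ricci tensor
`R_{ρν}(Γ) = ∂_λ Γ^λ_{ρν} − ∂_ν Γ^λ_{ρλ} + Γ^λ_{σλ} Γ^σ_{ρν} − Γ^λ_{σν} Γ^σ_{ρλ}`
of connection coefficients Γ. -/
noncomputable def ricci (Γ : Fin 4 → Fin 4 → Fin 4 → (Fin 4 → ℝ) → ℝ)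
    (ρ ν : Fin 4) (x : Fin 4 → ℝ) : ℝ :=
  (∑ l, pd (fun y => Γ l ρ ν y) l x) - (∑ l, pd (fun y => Γ l ρ l y) ν x)
    + (∑ l, ∑ σ, Γ l σ l x * Γ σ ρ ν x) - (∑ l, ∑ σ, Γ l σ ν x * Γ σ ρ l x)

/-- Levi-Civita covariant derivative `∇∘_ρ π_ν = ∂_ρ π_ν − γ^σ_{νρ} π_σ`. -/
noncomputable def covd (g : (Fin 4 → ℝ) → Matrix (Fin 4) (Fin 4) ℝ)
    (π : (Fin 4 → ℝ) → Fin 4 → ℝ) (ρ ν : Fin 4) (x : Fin 4 → ℝ) : ℝ :=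
  pd (fun y => π y ν) ρ x - ∑ σ, christoffel g σ ν ρ x * π x σ

/-- Covariant divergence `∇∘_α π^α = g^{αν} ∇∘_α π_ν`. -/
noncomputable def covDiv (g : (Fin 4 → ℝ) → Matrix (Fin 4) (Fin 4) ℝ)
    (π : (Fin 4 → ℝ) → Fin 4 → ℝ) (x : Fin 4 → ℝ) : ℝ :=
  ∑ α, ∑ ν, (g x)⁻¹ α ν * covd g π α ν x

/-- The scalar `π_σ π^σ = g^{σλ} π_σ π_λ`. -/
noncomputable def piSq (g : (Fin 4 → ℝ) → Matrix (Fin 4) (Fin 4) ℝ)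
    (π : (Fin 4 → ℝ) → Fin 4 → ℝ) (x : Fin 4 → ℝ) : ℝ :=
  ∑ σ, π x σ * piUp g π σ x

open Filter Topology


theorem pd_congr {f h : (Fin 4 → ℝ) → ℝ} {x : Fin 4 → ℝ} (hfh : f =ᶠ[nhds x] h) (μ : Fin 4) :
    pd f μ x = pd h μ x := by unfold pd; rw [hfh.fderiv_eq]

theorem pd_const (c : ℝ) (μ : Fin 4) (x : Fin 4 → ℝ) : pd (fun _ => c) μ x = 0 := by
  simp [pd]

theorem pd_add {f h : (Fin 4 → ℝ) → ℝ} {x : Fin 4 → ℝ} (hf : DifferentiableAt ℝ f x)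
    (hh : DifferentiableAt ℝ h x) (μ : Fin 4) :
    pd (fun y => f y + h y) μ x = pd f μ x + pd h μ x := by
  unfold pd; rw [fderiv_fun_add hf hh]; simp

theorem pd_mul {f h : (Fin 4 → ℝ) → ℝ} {x : Fin 4 → ℝ} (hf : DifferentiableAt ℝ f x)
    (hh : DifferentiableAt ℝ h x) (μ : Fin 4) :
    pd (fun y => f y * h y) μ x = f x * pd h μ x + h x * pd f μ x := by
  unfold pd; rw [fderiv_fun_mul hf hh]; simp

theorem pd_sum {ι : Type*} (s : Finset ι) (f : ι → (Fin 4 → ℝ) → ℝ) {x : Fin 4 → ℝ}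
    (hf : ∀ i ∈ s, DifferentiableAt ℝ (f i) x) (μ : Fin 4) :
    pd (fun y => ∑ i ∈ s, f i y) μ x = ∑ i ∈ s, pd (f i) μ x := by
  unfold pd; rw [fderiv_fun_sum hf]; simp


theorem pd_neg {f : (Fin 4 → ℝ) → ℝ} {x : Fin 4 → ℝ} (μ : Fin 4) :
    pd (fun y => -f y) μ x = -pd f μ x := by
  unfold pd; rw [fderiv_fun_neg]; simp

theorem pd_cmul {f : (Fin 4 → ℝ) → ℝ} {x : Fin 4 → ℝ} (c : ℝ)
    (hf : DifferentiableAt ℝ f x) (μ : Fin 4) :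
    pd (fun y => c * f y) μ x = c * pd f μ x := by
  unfold pd; rw [fderiv_const_mul hf]; simp

theorem contDiffAt_finset_prod' {ι : Type*} (s : Finset ι) (f : ι → (Fin 4 → ℝ) → ℝ)
    {x : Fin 4 → ℝ} (hf : ∀ i ∈ s, ContDiffAt ℝ (⊤ : ℕ∞) (f i) x) :
    ContDiffAt ℝ (⊤ : ℕ∞) (fun y => ∏ i ∈ s, f i y) x := by
  classical
  induction s using Finset.cons_induction with
  | empty => simpa using contDiffAt_const (c := (1:ℝ))
  | cons a s ha ih =>
    simp only [Finset.prod_cons]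
    exact (hf a (Finset.mem_cons_self a s)).mul
      (ih fun i hi => hf i (Finset.mem_cons_of_mem hi))

theorem contDiffAt_det' {A : (Fin 4 → ℝ) → Matrix (Fin 4) (Fin 4) ℝ} {x : Fin 4 → ℝ}
    (h : ∀ i j, ContDiffAt ℝ (⊤ : ℕ∞) (fun y => A y i j) x) :
    ContDiffAt ℝ (⊤ : ℕ∞) (fun y => (A y).det) x := by
  classical
  have : (fun y => (A y).det)
      = fun y => ∑ σ : Equiv.Perm (Fin 4), (Equiv.Perm.sign σ : ℝ) * ∏ i, A y (σ i) i := by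
    funext y; rw [Matrix.det_apply']
  rw [this]
  exact ContDiffAt.sum fun σ _ =>
    (contDiffAt_const (c := ((Equiv.Perm.sign σ : ℤ) : ℝ))).mul
      (contDiffAt_finset_prod' _ _ fun i _ => h (σ i) i)

theorem contDiffAt_inv_entry {g : (Fin 4 → ℝ) → Matrix (Fin 4) (Fin 4) ℝ} {x : Fin 4 → ℝ}
    (hg : ∀ i j, ContDiffAt ℝ (⊤ : ℕ∞) (fun y => g y i j) x) (hdet : (g x).det ≠ 0) (a b : Fin 4) :
    ContDiffAt ℝ (⊤ : ℕ∞) (fun y => (g y)⁻¹ a b) x := by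
  classical
  have hadj : ContDiffAt ℝ (⊤ : ℕ∞) (fun y => (g y).adjugate a b) x := by
    have e : (fun y => (g y).adjugate a b)
        = fun y => ((g y).updateRow b (Pi.single a 1)).det := by
      funext y; rw [Matrix.adjugate_apply]
    rw [e]
    refine contDiffAt_det' fun i j => ?_
    rcases eq_or_ne i b with rfl | hib
    · simpa [Matrix.updateRow_self] using contDiffAt_const (c := Pi.single (M := fun _ : Fin 4 => ℝ) a 1 j)
    · simpa [Matrix.updateRow_ne hib] using hg i j
  have e : (fun y => (g y)⁻¹ a b) = fun y => ((g y).det)⁻¹ * (g y).adjugate a b := by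
    funext y
    rw [Matrix.inv_def, Matrix.smul_apply, Ring.inverse_eq_inv', smul_eq_mul]
  rw [e]
  exact ((contDiffAt_det' hg).inv hdet).mul hadj


noncomputable def PUa (B : Matrix (Fin 4) (Fin 4) ℝ) (P : Fin 4 → ℝ) (a : Fin 4) : ℝ :=
  ∑ σ, B a σ * P σ

noncomputable def gam (B : Matrix (Fin 4) (Fin 4) ℝ) (dG : Fin 4 → Fin 4 → Fin 4 → ℝ)
    (l μ ν : Fin 4) : ℝ :=
  (1/2) * ∑ σ, B l σ * (dG μ σ ν + dG ν σ μ - dG σ μ ν)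

noncomputable def Nt (A B : Matrix (Fin 4) (Fin 4) ℝ) (P : Fin 4 → ℝ) (l ρ ν : Fin 4) : ℝ :=
  -(PUa B P l) * A ρ ν + (1/2) * P ν * (if l = ρ then 1 else 0)
    + (1/2) * P ρ * (if l = ν then 1 else 0)

noncomputable def dN (A B : Matrix (Fin 4) (Fin 4) ℝ) (P : Fin 4 → ℝ)
    (dG : Fin 4 → Fin 4 → Fin 4 → ℝ) (dP : Fin 4 → Fin 4 → ℝ) (μ l ρ ν : Fin 4) : ℝ :=
  -((∑ σ, ((-∑ c, ∑ d, B l c * dG μ c d * B d σ) * P σ + B l σ * dP μ σ)) * A ρ ν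
      + PUa B P l * dG μ ρ ν)
    + (1/2) * (if l = ρ then 1 else 0) * dP μ ν + (1/2) * (if l = ν then 1 else 0) * dP μ ρ

section Algebra

variable {A B : Matrix (Fin 4) (Fin 4) ℝ} {P : Fin 4 → ℝ}
  {dG : Fin 4 → Fin 4 → Fin 4 → ℝ} {dP : Fin 4 → Fin 4 → ℝ}

theorem collapse1 (hAB : ∀ a b, ∑ c, A a c * B c b = if a = b then (1:ℝ) else 0)
    (f : Fin 4 → ℝ) (a : Fin 4) : ∑ l, A a l * ∑ σ, B l σ * f σ = f a := by
  have h1 : ∀ l, A a l * ∑ σ, B l σ * f σ = ∑ σ, A a l * B l σ * f σ := fun l => by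
    rw [Finset.mul_sum]; exact Finset.sum_congr rfl fun σ _ => by ring
  rw [Finset.sum_congr rfl fun l _ => h1 l, Finset.sum_comm]
  have h2 : ∀ σ, ∑ l, A a l * B l σ * f σ = (∑ l, A a l * B l σ) * f σ := fun σ =>
    (Finset.sum_mul _ _ _).symm
  rw [Finset.sum_congr rfl fun σ _ => h2 σ]
  simp [hAB, ite_mul]

theorem hPA (hAB : ∀ a b, ∑ c, A a c * B c b = if a = b then (1:ℝ) else 0) (a : Fin 4) :
    ∑ l, PUa B P l * A a l = P a := by
  have : ∀ l, PUa B P l * A a l = A a l * ∑ σ, B l σ * P σ := fun l => by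
    rw [PUa]; ring
  rw [Finset.sum_congr rfl fun l _ => this l, collapse1 hAB]

theorem trace_gam (hB : ∀ a b, B a b = B b a) (hdG : ∀ μ a b, dG μ a b = dG μ b a) (a : Fin 4) :
    ∑ l, gam B dG l a l = (1/2) * ∑ l, ∑ c, B l c * dG a c l := by
  have key : ∑ l, ∑ c, B l c * dG l c a = ∑ l, ∑ c, B l c * dG c a l := by
    rw [Finset.sum_comm]
    exact Finset.sum_congr rfl fun l _ => Finset.sum_congr rfl fun c _ => by
      rw [hdG c l a, hB c l]
  simp only [gam]
  rw [← Finset.mul_sum]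
  congr 1
  have expand : ∀ l, ∑ σ, B l σ * (dG a σ l + dG l σ a - dG σ a l)
      = (∑ σ, B l σ * dG a σ l) + (∑ σ, B l σ * dG l σ a) - (∑ σ, B l σ * dG σ a l) := by
    intro l
    rw [← Finset.sum_add_distrib, ← Finset.sum_sub_distrib]
    exact Finset.sum_congr rfl fun σ _ => by ring
  rw [Finset.sum_congr rfl fun l _ => expand l, Finset.sum_sub_distrib, Finset.sum_add_distrib,
    key]
  ring

theorem hW (μ l : Fin 4) :
    (∑ σ, ((-∑ c, ∑ d, B l c * dG μ c d * B d σ) * P σ + B l σ * dP μ σ))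
      = -(∑ c, ∑ d, B l c * dG μ c d * PUa B P d) + ∑ σ, B l σ * dP μ σ := by
  rw [Finset.sum_add_distrib]
  congr 1
  have h1 : ∀ σ, (-∑ c, ∑ d, B l c * dG μ c d * B d σ) * P σ
      = ∑ c, ∑ d, -(B l c * dG μ c d * (B d σ * P σ)) := by
    intro σ
    rw [neg_mul, Finset.sum_mul, ← Finset.sum_neg_distrib]
    refine Finset.sum_congr rfl fun c _ => ?_
    rw [Finset.sum_mul, ← Finset.sum_neg_distrib]
    exact Finset.sum_congr rfl fun d _ => by ring
  rw [Finset.sum_congr rfl fun σ _ => h1 σ, Finset.sum_comm]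
  rw [Finset.sum_congr rfl fun c (_ : c ∈ Finset.univ) => Finset.sum_comm]
  rw [← Finset.sum_neg_distrib]
  refine Finset.sum_congr rfl fun c _ => ?_
  rw [← Finset.sum_neg_distrib]
  refine Finset.sum_congr rfl fun d _ => ?_
  rw [Finset.sum_neg_distrib, PUa, Finset.mul_sum]

theorem e1 (ρ ν : Fin 4) :
    ∑ l, dN A B P dG dP l l ρ ν
      = (∑ l, ∑ c, ∑ d, B l c * dG l c d * PUa B P d) * A ρ ν
        - (∑ l, ∑ σ, B l σ * dP l σ) * A ρ ν
        - (∑ l, PUa B P l * dG l ρ ν)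
        + (1/2) * dP ρ ν + (1/2) * dP ν ρ := by
  simp only [dN]
  have point : ∀ l : Fin 4,
      -((∑ σ, ((-∑ c, ∑ d, B l c * dG l c d * B d σ) * P σ + B l σ * dP l σ)) * A ρ ν
          + PUa B P l * dG l ρ ν)
        + (1/2) * (if l = ρ then 1 else 0) * dP l ν
        + (1/2) * (if l = ν then 1 else 0) * dP l ρ
      = (∑ c, ∑ d, B l c * dG l c d * PUa B P d) * A ρ ν
        - (∑ σ, B l σ * dP l σ) * A ρ ν
        - PUa B P l * dG l ρ ν
        + (1/2) * (if l = ρ then 1 else 0) * dP l ν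
        + (1/2) * (if l = ν then 1 else 0) * dP l ρ := by
    intro l; rw [hW]; ring
  rw [Finset.sum_congr rfl fun l _ => point l]
  simp only [Finset.sum_add_distrib, Finset.sum_sub_distrib, ← Finset.sum_mul]
  congr 1
  · congr 2
    simp [ite_mul, mul_ite, Finset.sum_ite_eq']
  · simp [ite_mul, mul_ite, Finset.sum_ite_eq']

theorem e2 (hAB : ∀ a b, ∑ c, A a c * B c b = if a = b then (1:ℝ) else 0)
    (ρ ν : Fin 4) :
    ∑ l, dN A B P dG dP ν l ρ l = (3/2) * dP ν ρ := by
  simp only [dN, eq_self_iff_true, if_true]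
  have point : ∀ l : Fin 4,
      -((∑ σ, ((-∑ c, ∑ d, B l c * dG ν c d * B d σ) * P σ + B l σ * dP ν σ)) * A ρ l
          + PUa B P l * dG ν ρ l)
        + (1/2) * (if l = ρ then 1 else 0) * dP ν l
        + (1/2) * 1 * dP ν ρ
      = A ρ l * ∑ c, B l c * (∑ d, dG ν c d * PUa B P d)
        - A ρ l * ∑ σ, B l σ * dP ν σ
        - PUa B P l * dG ν ρ l
        + (1/2) * (if l = ρ then 1 else 0) * dP ν l
        + (1/2) * dP ν ρ := by
    intro l
    rw [hW]
    have : (∑ c, ∑ d, B l c * dG ν c d * PUa B P d)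
        = ∑ c, B l c * (∑ d, dG ν c d * PUa B P d) := by
      refine Finset.sum_congr rfl fun c _ => ?_
      rw [Finset.mul_sum]
      exact Finset.sum_congr rfl fun d _ => by ring
    rw [this]; ring
  rw [Finset.sum_congr rfl fun l _ => point l]
  simp only [Finset.sum_add_distrib, Finset.sum_sub_distrib]
  rw [collapse1 hAB (fun c => ∑ d, dG ν c d * PUa B P d) ρ,
    collapse1 hAB (fun σ => dP ν σ) ρ]
  have hY : ∑ l, PUa B P l * dG ν ρ l = ∑ d, dG ν ρ d * PUa B P d :=
    Finset.sum_congr rfl fun l _ => by ring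
  rw [hY]
  simp [ite_mul, Finset.sum_ite_eq']
  ring

theorem sum_half (f : Fin 4 → ℝ) : ∑ s, (1/2 : ℝ) * f s = (1/2) * ∑ s, f s :=
  (Finset.mul_sum _ _ _).symm

theorem gam_symm (hdG : ∀ μ a b, dG μ a b = dG μ b a) (l μ ν : Fin 4) :
    gam B dG l μ ν = gam B dG l ν μ := by
  simp only [gam]
  congr 1
  exact Finset.sum_congr rfl fun σ _ => by rw [hdG σ μ ν]; ring

theorem Nt_contract (hAB : ∀ a b, ∑ c, A a c * B c b = if a = b then (1:ℝ) else 0)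
    (s : Fin 4) : ∑ l, Nt A B P l s l = (3/2) * P s := by
  simp only [Nt, eq_self_iff_true, if_true]
  simp only [Finset.sum_add_distrib]
  have h1 : ∑ l, -PUa B P l * A s l = -P s := by
    rw [Finset.sum_congr rfl fun l (_ : l ∈ Finset.univ) => (neg_mul (PUa B P l) (A s l)),
      Finset.sum_neg_distrib, hPA hAB]
  rw [h1]
  simp [mul_ite, Finset.sum_ite_eq']
  ring

theorem low_gam (hAB : ∀ a b, ∑ c, A a c * B c b = if a = b then (1:ℝ) else 0)
    (s a b : Fin 4) :
    ∑ l, A a l * gam B dG l s b = (1/2) * (dG s a b + dG b a s - dG a s b) := by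
  simp only [gam]
  have point : ∀ l, A a l * ((1/2) * ∑ c, B l c * (dG s c b + dG b c s - dG c s b))
      = (1/2) * (A a l * ∑ c, B l c * (dG s c b + dG b c s - dG c s b)) := fun l => by ring
  rw [Finset.sum_congr rfl fun l _ => point l, sum_half,
    collapse1 hAB (fun c => dG s c b + dG b c s - dG c s b) a]

theorem hPA' (hAB : ∀ a b, ∑ c, A a c * B c b = if a = b then (1:ℝ) else 0)
    (hA : ∀ a b, A a b = A b a) (a : Fin 4) :
    ∑ l, PUa B P l * A l a = P a := by
  rw [Finset.sum_congr rfl fun l (_ : l ∈ Finset.univ) => by rw [hA l a], hPA hAB]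

theorem e3 (hB : ∀ a b, B a b = B b a) (hdG : ∀ μ a b, dG μ a b = dG μ b a) (ρ ν : Fin 4) :
    ∑ l, ∑ σ, gam B dG l σ l * Nt A B P σ ρ ν
      = -(1/2) * (∑ s, ∑ l, ∑ c, B l c * dG s c l * PUa B P s) * A ρ ν
        + (1/2) * ((1/2) * ∑ l, ∑ c, B l c * dG ρ c l) * P ν
        + (1/2) * ((1/2) * ∑ l, ∑ c, B l c * dG ν c l) * P ρ := by
  rw [Finset.sum_comm]
  rw [Finset.sum_congr rfl fun s (_ : s ∈ Finset.univ) => (Finset.sum_mul _ _ _).symm]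
  rw [Finset.sum_congr rfl fun s (_ : s ∈ Finset.univ) => by rw [trace_gam hB hdG s]]
  simp only [Nt]
  have point : ∀ s : Fin 4,
      (1/2) * (∑ l, ∑ c, B l c * dG s c l)
        * (-(PUa B P s) * A ρ ν + (1/2) * P ν * (if s = ρ then 1 else 0)
            + (1/2) * P ρ * (if s = ν then 1 else 0))
      = -(1/2) * ((∑ l, ∑ c, B l c * dG s c l) * PUa B P s) * A ρ ν
        + (1/2) * ((1/2) * (∑ l, ∑ c, B l c * dG s c l)) * P ν * (if s = ρ then 1 else 0)
        + (1/2) * ((1/2) * (∑ l, ∑ c, B l c * dG s c l)) * P ρ * (if s = ν then 1 else 0) := by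
    intro s; ring
  rw [Finset.sum_congr rfl fun s _ => point s]
  simp only [Finset.sum_add_distrib]
  have h1 : ∑ s, -(1/2) * ((∑ l, ∑ c, B l c * dG s c l) * PUa B P s) * A ρ ν
      = -(1/2) * (∑ s, ∑ l, ∑ c, B l c * dG s c l * PUa B P s) * A ρ ν := by
    have expand : ∀ s, (∑ l, ∑ c, B l c * dG s c l) * PUa B P s
        = ∑ l, ∑ c, B l c * dG s c l * PUa B P s := by
      intro s
      rw [Finset.sum_mul]
      exact Finset.sum_congr rfl fun l _ => by rw [Finset.sum_mul]
    rw [Finset.sum_congr rfl fun s (_ : s ∈ Finset.univ) => by rw [expand s],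
      ← Finset.sum_mul, ← Finset.mul_sum]
  rw [h1]
  simp [mul_ite, Finset.sum_ite_eq']

theorem e4 (hAB : ∀ a b, ∑ c, A a c * B c b = if a = b then (1:ℝ) else 0) (ρ ν : Fin 4) :
    ∑ l, ∑ σ, Nt A B P l σ l * gam B dG σ ρ ν
      = (3/2) * ∑ σ, gam B dG σ ρ ν * P σ := by
  rw [Finset.sum_comm]
  rw [Finset.sum_congr rfl fun s (_ : s ∈ Finset.univ) => (Finset.sum_mul _ _ _).symm]
  rw [Finset.sum_congr rfl fun s (_ : s ∈ Finset.univ) => by rw [Nt_contract hAB s]]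
  rw [show ∑ s, (3/2) * P s * gam B dG s ρ ν = ∑ s, (3/2) * (gam B dG s ρ ν * P s) from
    Finset.sum_congr rfl fun s _ => by ring, ← Finset.mul_sum]

theorem e5 (hAB : ∀ a b, ∑ c, A a c * B c b = if a = b then (1:ℝ) else 0) (ρ ν : Fin 4) :
    ∑ l, ∑ σ, Nt A B P l σ l * Nt A B P σ ρ ν
      = -(3/2) * (∑ σ, P σ * PUa B P σ) * A ρ ν + (3/2) * P ρ * P ν := by
  rw [Finset.sum_comm]
  rw [Finset.sum_congr rfl fun s (_ : s ∈ Finset.univ) => (Finset.sum_mul _ _ _).symm]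
  rw [Finset.sum_congr rfl fun s (_ : s ∈ Finset.univ) => by rw [Nt_contract hAB s]]
  simp only [Nt]
  have point : ∀ s : Fin 4,
      (3/2) * P s * (-(PUa B P s) * A ρ ν + (1/2) * P ν * (if s = ρ then 1 else 0)
        + (1/2) * P ρ * (if s = ν then 1 else 0))
      = -(3/2) * (P s * PUa B P s) * A ρ ν
        + (3/4) * P s * P ν * (if s = ρ then 1 else 0)
        + (3/4) * P s * P ρ * (if s = ν then 1 else 0) := by intro s; ring
  rw [Finset.sum_congr rfl fun s _ => point s]
  simp only [Finset.sum_add_distrib]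
  have h1 : ∑ s, -(3/2) * (P s * PUa B P s) * A ρ ν
      = -(3/2) * (∑ σ, P σ * PUa B P σ) * A ρ ν := by
    rw [← Finset.sum_mul, ← Finset.mul_sum]
  rw [h1]
  simp [mul_ite, Finset.sum_ite_eq']
  ring

theorem e6 (hAB : ∀ a b, ∑ c, A a c * B c b = if a = b then (1:ℝ) else 0)
    (hB : ∀ a b, B a b = B b a) (hdG : ∀ μ a b, dG μ a b = dG μ b a) (ρ ν : Fin 4) :
    ∑ l, ∑ σ, gam B dG l σ ν * Nt A B P σ ρ l
      = -(1/2) * (∑ σ, PUa B P σ * dG σ ρ ν)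
        - (1/2) * (∑ σ, PUa B P σ * dG ν ρ σ)
        + (1/2) * (∑ σ, PUa B P σ * dG ρ σ ν)
        + (1/2) * (∑ σ, gam B dG σ ρ ν * P σ)
        + (1/2) * P ρ * ((1/2) * ∑ l, ∑ c, B l c * dG ν c l) := by
  simp only [Nt]
  have point : ∀ l s : Fin 4,
      gam B dG l s ν * (-(PUa B P s) * A ρ l + (1/2) * P l * (if s = ρ then 1 else 0)
          + (1/2) * P ρ * (if s = l then 1 else 0))
      = -(PUa B P s * (A ρ l * gam B dG l s ν))
        + (1/2) * P l * gam B dG l s ν * (if s = ρ then 1 else 0)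
        + (1/2) * P ρ * gam B dG l s ν * (if s = l then 1 else 0) := by
    intro l s; ring
  rw [Finset.sum_congr rfl fun l (_ : l ∈ Finset.univ) =>
    Finset.sum_congr rfl fun s _ => point l s]
  simp only [Finset.sum_add_distrib]
  have h1 : ∑ l, ∑ s, -(PUa B P s * (A ρ l * gam B dG l s ν))
      = -(1/2) * (∑ σ, PUa B P σ * dG σ ρ ν) - (1/2) * (∑ σ, PUa B P σ * dG ν ρ σ)
        + (1/2) * (∑ σ, PUa B P σ * dG ρ σ ν) := by
    rw [Finset.sum_comm]
    have inner : ∀ s, ∑ l, -(PUa B P s * (A ρ l * gam B dG l s ν))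
        = -(PUa B P s * ((1/2) * (dG s ρ ν + dG ν ρ s - dG ρ s ν))) := by
      intro s
      rw [Finset.sum_neg_distrib, ← Finset.mul_sum, low_gam hAB s ρ ν]
    rw [Finset.sum_congr rfl fun s _ => inner s]
    have point2 : ∀ s : Fin 4,
        -(PUa B P s * ((1/2) * (dG s ρ ν + dG ν ρ s - dG ρ s ν)))
        = -(1/2) * (PUa B P s * dG s ρ ν) + (-(1/2)) * (PUa B P s * dG ν ρ s)
          + (1/2) * (PUa B P s * dG ρ s ν) := fun s => by ring
    rw [Finset.sum_congr rfl fun s _ => point2 s]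
    simp only [Finset.sum_add_distrib, ← Finset.mul_sum]
    ring
  rw [h1]
  have h2 : ∑ l, ∑ s, (1/2) * P l * gam B dG l s ν * (if s = ρ then 1 else 0)
      = (1/2) * (∑ σ, gam B dG σ ρ ν * P σ) := by
    have inner : ∀ l, ∑ s, (1/2) * P l * gam B dG l s ν * (if s = ρ then 1 else 0)
        = (1/2) * (gam B dG l ρ ν * P l) := by
      intro l
      have h : ∑ s, (1/2) * P l * gam B dG l s ν * (if s = ρ then 1 else 0)
          = (1/2) * P l * gam B dG l ρ ν := by
        simp [mul_ite, Finset.sum_ite_eq']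
      rw [h]; ring
    rw [Finset.sum_congr rfl fun l _ => inner l, ← Finset.mul_sum]
  rw [h2]
  have h3 : ∑ l, ∑ s, (1/2) * P ρ * gam B dG l s ν * (if s = l then 1 else 0)
      = (1/2) * P ρ * ((1/2) * ∑ l, ∑ c, B l c * dG ν c l) := by
    have inner : ∀ l, ∑ s, (1/2) * P ρ * gam B dG l s ν * (if s = l then 1 else 0)
        = (1/2) * P ρ * gam B dG l ν l := by
      intro l
      have h : ∑ s, (1/2) * P ρ * gam B dG l s ν * (if s = l then 1 else 0)
          = (1/2) * P ρ * gam B dG l l ν := by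
        simp [mul_ite, Finset.sum_ite_eq']
      rw [h, gam_symm hdG l l ν]
    rw [Finset.sum_congr rfl fun l _ => inner l, ← Finset.mul_sum, trace_gam hB hdG ν]
  rw [h3]

theorem e7 (hAB : ∀ a b, ∑ c, A a c * B c b = if a = b then (1:ℝ) else 0)
    (hA : ∀ a b, A a b = A b a) (hB : ∀ a b, B a b = B b a)
    (hdG : ∀ μ a b, dG μ a b = dG μ b a) (ρ ν : Fin 4) :
    ∑ l, ∑ σ, Nt A B P l σ ν * gam B dG σ ρ l
      = -(1/2) * (∑ σ, PUa B P σ * dG ρ σ ν)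
        - (1/2) * (∑ σ, PUa B P σ * dG σ ρ ν)
        + (1/2) * (∑ σ, PUa B P σ * dG ν ρ σ)
        + (1/2) * P ν * ((1/2) * ∑ l, ∑ c, B l c * dG ρ c l)
        + (1/2) * (∑ σ, gam B dG σ ρ ν * P σ) := by
  simp only [Nt]
  have point : ∀ l s : Fin 4,
      (-(PUa B P l) * A s ν + (1/2) * P ν * (if l = s then 1 else 0)
          + (1/2) * P s * (if l = ν then 1 else 0)) * gam B dG s ρ l
      = -(PUa B P l * (A ν s * gam B dG s ρ l))
        + (1/2) * P ν * gam B dG s ρ l * (if l = s then 1 else 0)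
        + (1/2) * P s * gam B dG s ρ l * (if l = ν then 1 else 0) := by
    intro l s; rw [hA s ν]; ring
  rw [Finset.sum_congr rfl fun l (_ : l ∈ Finset.univ) =>
    Finset.sum_congr rfl fun s _ => point l s]
  simp only [Finset.sum_add_distrib]
  have h1 : ∑ l, ∑ s, -(PUa B P l * (A ν s * gam B dG s ρ l))
      = -(1/2) * (∑ σ, PUa B P σ * dG ρ σ ν) - (1/2) * (∑ σ, PUa B P σ * dG σ ρ ν)
        + (1/2) * (∑ σ, PUa B P σ * dG ν ρ σ) := by
    have inner : ∀ l, ∑ s, -(PUa B P l * (A ν s * gam B dG s ρ l))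
        = -(PUa B P l * ((1/2) * (dG ρ ν l + dG l ν ρ - dG ν ρ l))) := by
      intro l
      rw [Finset.sum_neg_distrib, ← Finset.mul_sum, low_gam hAB ρ ν l]
    rw [Finset.sum_congr rfl fun l _ => inner l]
    have point2 : ∀ l : Fin 4,
        -(PUa B P l * ((1/2) * (dG ρ ν l + dG l ν ρ - dG ν ρ l)))
        = -(1/2) * (PUa B P l * dG ρ l ν) + (-(1/2)) * (PUa B P l * dG l ρ ν)
          + (1/2) * (PUa B P l * dG ν ρ l) := by
      intro l; rw [hdG ρ ν l, hdG l ν ρ]; ring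
    rw [Finset.sum_congr rfl fun l _ => point2 l]
    simp only [Finset.sum_add_distrib, ← Finset.mul_sum]
    ring
  rw [h1]
  have h2 : ∑ l, ∑ s, (1/2) * P ν * gam B dG s ρ l * (if l = s then 1 else 0)
      = (1/2) * P ν * ((1/2) * ∑ l, ∑ c, B l c * dG ρ c l) := by
    have inner : ∀ l, ∑ s, (1/2) * P ν * gam B dG s ρ l * (if l = s then 1 else 0)
        = (1/2) * P ν * gam B dG l ρ l := by
      intro l
      simp [mul_ite, Finset.sum_ite_eq]
    rw [Finset.sum_congr rfl fun l _ => inner l, ← Finset.mul_sum, trace_gam hB hdG ρ]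
  rw [h2]
  have h3 : ∑ l, ∑ s, (1/2) * P s * gam B dG s ρ l * (if l = ν then 1 else 0)
      = (1/2) * (∑ σ, gam B dG σ ρ ν * P σ) := by
    have inner : ∀ l, ∑ s, (1/2) * P s * gam B dG s ρ l * (if l = ν then 1 else 0)
        = (if l = ν then 1 else 0) * ∑ s, (1/2) * (gam B dG s ρ l * P s) := by
      intro l
      rw [Finset.mul_sum]
      exact Finset.sum_congr rfl fun s _ => by ring
    rw [Finset.sum_congr rfl fun l _ => inner l]
    simp [ite_mul, Finset.sum_ite_eq']
    rw [← Finset.mul_sum]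
  rw [h3]

theorem e9 (hdG : ∀ μ a b, dG μ a b = dG μ b a) (ρ ν : Fin 4) :
    ∑ σ, gam B dG σ ν ρ * P σ = ∑ σ, gam B dG σ ρ ν * P σ :=
  Finset.sum_congr rfl fun σ _ => by rw [gam_symm hdG σ ν ρ]

theorem e8 (hB : ∀ a b, B a b = B b a) (hdG : ∀ μ a b, dG μ a b = dG μ b a) :
    ∑ α, ∑ b, B α b * (dP α b - ∑ σ, gam B dG σ b α * P σ)
      = (∑ l, ∑ σ, B l σ * dP l σ)
        - (∑ l, ∑ c, ∑ d, B l c * dG l c d * PUa B P d)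
        + (1/2) * (∑ s, ∑ l, ∑ c, B l c * dG s c l * PUa B P s) := by
  have hgP : ∀ b α : Fin 4, ∑ σ, gam B dG σ b α * P σ
      = (1/2) * ∑ c, PUa B P c * (dG b c α + dG α c b - dG c b α) := by
    intro b α
    have point : ∀ σ, gam B dG σ b α * P σ
        = ∑ c, (1/2) * (B c σ * P σ) * (dG b c α + dG α c b - dG c b α) := by
      intro σ
      rw [gam, mul_assoc, Finset.sum_mul, Finset.mul_sum]
      exact Finset.sum_congr rfl fun c _ => by rw [hB σ c]; ring
    rw [Finset.sum_congr rfl fun σ _ => point σ, Finset.sum_comm, Finset.mul_sum]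
    refine Finset.sum_congr rfl fun c _ => ?_
    rw [show ∀ K : ℝ, (∑ σ, (1/2) * (B c σ * P σ) * K) = (1/2) * (∑ σ, B c σ * P σ) * K from
      fun K => by rw [← Finset.sum_mul, ← Finset.mul_sum], PUa]
    ring
  have split : ∀ α b : Fin 4, B α b * (dP α b - ∑ σ, gam B dG σ b α * P σ)
      = B α b * dP α b
        - ((1/2) * ∑ c, B α b * dG b c α * PUa B P c)
        - ((1/2) * ∑ c, B α b * dG α c b * PUa B P c)
        + ((1/2) * ∑ c, B α b * dG c b α * PUa B P c) := by
    intro α b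
    rw [hgP b α]
    have expand : ∑ c, PUa B P c * (dG b c α + dG α c b - dG c b α)
        = (∑ c, PUa B P c * dG b c α) + (∑ c, PUa B P c * dG α c b)
          - (∑ c, PUa B P c * dG c b α) := by
      rw [show (∑ c, PUa B P c * (dG b c α + dG α c b - dG c b α))
          = ∑ c, (PUa B P c * dG b c α + PUa B P c * dG α c b - PUa B P c * dG c b α) from
        Finset.sum_congr rfl fun c _ => by ring, Finset.sum_sub_distrib, Finset.sum_add_distrib]
    rw [expand]
    have m : ∀ (dd : Fin 4 → ℝ), B α b * ∑ c, PUa B P c * dd c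
        = ∑ c, B α b * dd c * PUa B P c := by
      intro dd
      rw [Finset.mul_sum]
      exact Finset.sum_congr rfl fun c _ => by ring
    rw [show B α b * (dP α b - (1/2) * ((∑ c, PUa B P c * dG b c α)
        + (∑ c, PUa B P c * dG α c b) - (∑ c, PUa B P c * dG c b α)))
      = B α b * dP α b - (1/2) * (B α b * ∑ c, PUa B P c * dG b c α)
        - (1/2) * (B α b * ∑ c, PUa B P c * dG α c b)
        + (1/2) * (B α b * ∑ c, PUa B P c * dG c b α) from by ring]
    rw [m, m, m]
  rw [Finset.sum_congr rfl fun α (_ : α ∈ Finset.univ) =>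
    Finset.sum_congr rfl fun b _ => split α b]
  simp only [Finset.sum_add_distrib, Finset.sum_sub_distrib, ← Finset.mul_sum]
  have hU1 : ∑ α, ∑ b, ∑ c, B α b * dG b c α * PUa B P c
      = ∑ l, ∑ c, ∑ d, B l c * dG l c d * PUa B P d := by
    rw [Finset.sum_comm]
    exact Finset.sum_congr rfl fun b _ => Finset.sum_congr rfl fun α _ =>
      Finset.sum_congr rfl fun c _ => by rw [hB α b, hdG b c α]
  have hU2 : ∑ α, ∑ b, ∑ c, B α b * dG α c b * PUa B P c
      = ∑ l, ∑ c, ∑ d, B l c * dG l c d * PUa B P d :=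
    Finset.sum_congr rfl fun α _ => Finset.sum_congr rfl fun b _ =>
      Finset.sum_congr rfl fun c _ => by rw [hdG α c b]
  have hU3 : ∑ α, ∑ b, ∑ c, B α b * dG c b α * PUa B P c
      = ∑ s, ∑ l, ∑ c, B l c * dG s c l * PUa B P s := by
    rw [Finset.sum_congr rfl fun α (_ : α ∈ Finset.univ) => Finset.sum_comm, Finset.sum_comm]
  rw [hU1, hU2, hU3]
  ring

theorem e10 (hAB : ∀ a b, ∑ c, A a c * B c b = if a = b then (1:ℝ) else 0)
    (hA : ∀ a b, A a b = A b a) (ρ ν : Fin 4) :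
    ∑ l, ∑ σ, Nt A B P l σ ν * Nt A B P σ ρ l
      = (7/4) * P ρ * P ν - (∑ σ, P σ * PUa B P σ) * A ρ ν := by
  simp only [Nt]
  have point : ∀ l s : Fin 4,
      (-(PUa B P l) * A s ν + (1/2) * P ν * (if l = s then 1 else 0)
          + (1/2) * P s * (if l = ν then 1 else 0))
        * (-(PUa B P s) * A ρ l + (1/2) * P l * (if s = ρ then 1 else 0)
          + (1/2) * P ρ * (if s = l then 1 else 0))
      = (PUa B P l * A ρ l) * (PUa B P s * A s ν)
        + (-(1/2)) * ((P l * PUa B P l) * A s ν) * (if s = ρ then 1 else 0)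
        + (-(1/2)) * P ρ * (PUa B P l * A s ν) * (if s = l then 1 else 0)
        + (-(1/2)) * P ν * (PUa B P s * A ρ l) * (if l = s then 1 else 0)
        + (1/4) * P ν * P l * (if l = s then 1 else 0) * (if s = ρ then 1 else 0)
        + (1/4) * P ν * P ρ * (if l = s then 1 else 0) * (if s = l then 1 else 0)
        + (-(1/2)) * (P s * PUa B P s) * A ρ l * (if l = ν then 1 else 0)
        + (1/4) * P s * P l * (if l = ν then 1 else 0) * (if s = ρ then 1 else 0)
        + (1/4) * P s * P ρ * (if l = ν then 1 else 0) * (if s = l then 1 else 0) := by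
    intro l s; ring
  rw [Finset.sum_congr rfl fun l (_ : l ∈ Finset.univ) =>
    Finset.sum_congr rfl fun s _ => point l s]
  simp only [Finset.sum_add_distrib]
  have t11 : ∑ l, ∑ s, (PUa B P l * A ρ l) * (PUa B P s * A s ν) = P ρ * P ν := by
    have inner : ∀ l, ∑ s, (PUa B P l * A ρ l) * (PUa B P s * A s ν)
        = (PUa B P l * A ρ l) * P ν := by
      intro l; rw [← Finset.mul_sum, hPA' hAB hA ν]
    rw [Finset.sum_congr rfl fun l _ => inner l, ← Finset.sum_mul]
    have : ∑ l, PUa B P l * A ρ l = P ρ := hPA hAB ρ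
    rw [this]
  rw [t11]
  have t12 : ∑ l, ∑ s, (-(1/2)) * ((P l * PUa B P l) * A s ν) * (if s = ρ then 1 else 0)
      = (-(1/2)) * (∑ σ, P σ * PUa B P σ) * A ρ ν := by
    have inner : ∀ l, ∑ s, (-(1/2)) * ((P l * PUa B P l) * A s ν) * (if s = ρ then 1 else 0)
        = (-(1/2)) * (P l * PUa B P l) * A ρ ν := by
      intro l; simp [mul_ite, Finset.sum_ite_eq']; ring
    rw [Finset.sum_congr rfl fun l _ => inner l, ← Finset.sum_mul, ← Finset.mul_sum]
  rw [t12]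
  have t13 : ∑ l, ∑ s, (-(1/2)) * P ρ * (PUa B P l * A s ν) * (if s = l then 1 else 0)
      = (-(1/2)) * P ρ * P ν := by
    have inner : ∀ l, ∑ s, (-(1/2)) * P ρ * (PUa B P l * A s ν) * (if s = l then 1 else 0)
        = (-(1/2)) * P ρ * (PUa B P l * A l ν) := by
      intro l; simp [mul_ite, Finset.sum_ite_eq']
    rw [Finset.sum_congr rfl fun l _ => inner l, ← Finset.mul_sum, hPA' hAB hA ν]
  rw [t13]
  have t21 : ∑ l, ∑ s, (-(1/2)) * P ν * (PUa B P s * A ρ l) * (if l = s then 1 else 0)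
      = (-(1/2)) * P ν * P ρ := by
    have inner : ∀ l, ∑ s, (-(1/2)) * P ν * (PUa B P s * A ρ l) * (if l = s then 1 else 0)
        = (-(1/2)) * P ν * (PUa B P l * A ρ l) := by
      intro l; simp [mul_ite, Finset.sum_ite_eq]
    rw [Finset.sum_congr rfl fun l _ => inner l, ← Finset.mul_sum, hPA hAB ρ]
  rw [t21]
  have t22 : ∑ l, ∑ s, (1/4) * P ν * P l * (if l = s then 1 else 0) * (if s = ρ then 1 else 0)
      = (1/4) * P ν * P ρ := by
    have inner : ∀ l, ∑ s, (1/4) * P ν * P l * (if l = s then 1 else 0) * (if s = ρ then 1 else 0)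
        = (1/4) * P ν * P l * (if l = ρ then 1 else 0) := by
      intro l; simp [mul_ite, ite_mul, Finset.sum_ite_eq]
    rw [Finset.sum_congr rfl fun l _ => inner l]
    simp [mul_ite, Finset.sum_ite_eq']
  rw [t22]
  have t23 : ∑ l : Fin 4, ∑ s : Fin 4, (1/4) * P ν * P ρ * (if l = s then (1:ℝ) else 0)
        * (if s = l then (1:ℝ) else 0)
      = P ν * P ρ := by
    have inner : ∀ l : Fin 4, ∑ s, (1/4) * P ν * P ρ * (if l = s then (1:ℝ) else 0)
          * (if s = l then (1:ℝ) else 0)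
        = (1/4) * P ν * P ρ := by
      intro l; simp [mul_ite, ite_mul, Finset.sum_ite_eq]
    rw [Finset.sum_congr rfl fun l _ => inner l]
    simp [Finset.sum_const]
    ring
  rw [t23]
  have t31 : ∑ l, ∑ s, (-(1/2)) * (P s * PUa B P s) * A ρ l * (if l = ν then 1 else 0)
      = (-(1/2)) * (∑ σ, P σ * PUa B P σ) * A ρ ν := by
    have inner : ∀ l, ∑ s, (-(1/2)) * (P s * PUa B P s) * A ρ l * (if l = ν then 1 else 0)
        = ((-(1/2)) * (∑ σ, P σ * PUa B P σ) * A ρ l) * (if l = ν then 1 else 0) := by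
      intro l
      rw [← Finset.sum_mul, ← Finset.sum_mul, ← Finset.mul_sum]
    rw [Finset.sum_congr rfl fun l _ => inner l]
    simp [mul_ite, Finset.sum_ite_eq']
  rw [t31]
  have t32 : ∑ l, ∑ s, (1/4) * P s * P l * (if l = ν then 1 else 0) * (if s = ρ then 1 else 0)
      = (1/4) * P ρ * P ν := by
    have inner : ∀ l, ∑ s, (1/4) * P s * P l * (if l = ν then 1 else 0) * (if s = ρ then 1 else 0)
        = (1/4) * P ρ * P l * (if l = ν then 1 else 0) := by
      intro l; simp [mul_ite, ite_mul, Finset.sum_ite_eq']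
    rw [Finset.sum_congr rfl fun l _ => inner l]
    simp [mul_ite, Finset.sum_ite_eq']
  rw [t32]
  have t33 : ∑ l, ∑ s, (1/4) * P s * P ρ * (if l = ν then (1:ℝ) else 0)
        * (if s = l then (1:ℝ) else 0)
      = (1/4) * P ν * P ρ := by
    have inner : ∀ l, ∑ s, (1/4) * P s * P ρ * (if l = ν then (1:ℝ) else 0)
          * (if s = l then (1:ℝ) else 0)
        = (1/4) * P l * P ρ * (if l = ν then (1:ℝ) else 0) := by
      intro l; simp [mul_ite, ite_mul, Finset.sum_ite_eq']
    rw [Finset.sum_congr rfl fun l _ => inner l]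
    simp [mul_ite, ite_mul, Finset.sum_ite_eq']
  rw [t33]
  ring

theorem main_algebra
    (hAB : ∀ a b, ∑ c, A a c * B c b = if a = b then (1:ℝ) else 0)
    (hA : ∀ a b, A a b = A b a) (hB : ∀ a b, B a b = B b a)
    (hdG : ∀ μ a b, dG μ a b = dG μ b a) (ρ ν : Fin 4) :
    (∑ l, dN A B P dG dP l l ρ ν) - (∑ l, dN A B P dG dP ν l ρ l)
      + ((∑ l, ∑ σ, gam B dG l σ l * Nt A B P σ ρ ν)
        + (∑ l, ∑ σ, Nt A B P l σ l * gam B dG σ ρ ν)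
        + (∑ l, ∑ σ, Nt A B P l σ l * Nt A B P σ ρ ν))
      - ((∑ l, ∑ σ, gam B dG l σ ν * Nt A B P σ ρ l)
        + (∑ l, ∑ σ, Nt A B P l σ ν * gam B dG σ ρ l)
        + (∑ l, ∑ σ, Nt A B P l σ ν * Nt A B P σ ρ l))
    = - A ρ ν * (∑ α, ∑ b, B α b * (dP α b - ∑ σ, gam B dG σ b α * P σ))
      + (1/2) * (dP ρ ν - ∑ σ, gam B dG σ ν ρ * P σ)
      - (dP ν ρ - ∑ σ, gam B dG σ ρ ν * P σ)
      - (1/2) * (∑ σ, P σ * PUa B P σ) * A ρ ν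
      - (1/4) * P ρ * P ν := by
  rw [e1 ρ ν, e2 hAB ρ ν, e3 hB hdG ρ ν, e4 hAB ρ ν, e5 hAB ρ ν, e6 hAB hB hdG ρ ν,
    e7 hAB hA hB hdG ρ ν, e10 hAB hA ρ ν, e8 hB hdG, e9 hdG ρ ν]
  ring

end Algebra

/-- The Ricci tensor of the Schrödinger connection `Γ = γ + N` satisfies
`R_{ρν} = R∘_{ρν} − g_{ρν} ∇∘_α π^α + (1/2) ∇∘_ρ π_ν − ∇∘_ν π_ρ − (1/2)(π_σ π^σ) g_{ρν}
− (1/4) π_ρ π_ν` on U. -/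
theorem schrodinger_ricci
    (U : Set (Fin 4 → ℝ)) (hU : IsOpen U)
    (g : (Fin 4 → ℝ) → Matrix (Fin 4) (Fin 4) ℝ)
    (hg : ∀ μ ν : Fin 4, ContDiffOn ℝ (⊤ : ℕ∞) (fun x => g x μ ν) U)
    (hsymm : ∀ x ∈ U, (g x).IsSymm)
    (hinv : ∀ x ∈ U, IsUnit (g x).det)
    (π : (Fin 4 → ℝ) → Fin 4 → ℝ)
    (hπ : ∀ μ : Fin 4, ContDiffOn ℝ (⊤ : ℕ∞) (fun x => π x μ) U) :
    ∀ x ∈ U, ∀ ρ ν : Fin 4,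
      ricci (fun l m k y => christoffel g l m k y + schN g π l m k y) ρ ν x
        = ricci (christoffel g) ρ ν x
          - g x ρ ν * covDiv g π x
          + (1/2) * covd g π ρ ν x
          - covd g π ν ρ x
          - (1/2) * piSq g π x * g x ρ ν
          - (1/4) * π x ρ * π x ν := by
  
  intro x hx ρ ν
  classical
  have hxU : U ∈ 𝓝 x := hU.mem_nhds hx
  have D : ∀ {f : (Fin 4 → ℝ) → ℝ}, ContDiffAt ℝ (⊤ : ℕ∞) f x → DifferentiableAt ℝ f x :=
    fun h => h.differentiableAt (by simp)
  have cg : ∀ a b, ContDiffAt ℝ (⊤ : ℕ∞) (fun y => g y a b) x := fun a b => (hg a b).contDiffAt hxU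
  have cπ : ∀ a, ContDiffAt ℝ (⊤ : ℕ∞) (fun y => π y a) x := fun a => (hπ a).contDiffAt hxU
  have hdet : (g x).det ≠ 0 := (hinv x hx).ne_zero
  have cGi : ∀ a b, ContDiffAt ℝ (⊤ : ℕ∞) (fun y => (g y)⁻¹ a b) x := fun a b =>
    contDiffAt_inv_entry cg hdet a b
  have cpdg : ∀ (μ a b : Fin 4), ContDiffAt ℝ (⊤ : ℕ∞) (fun y => pd (fun z => g z a b) μ y) x := by
    intro μ a b
    exact ((cg a b).fderiv_right (by simp)).clm_apply contDiffAt_const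
  have cPU : ∀ l, ContDiffAt ℝ (⊤ : ℕ∞) (fun y => piUp g π l y) x := by
    intro l
    have e : (fun y => piUp g π l y) = fun y => ∑ σ, (g y)⁻¹ l σ * π y σ := rfl
    rw [e]; exact ContDiffAt.sum fun σ _ => (cGi l σ).mul (cπ σ)
  have cChr : ∀ l m k, ContDiffAt ℝ (⊤ : ℕ∞) (fun y => christoffel g l m k y) x := by
    intro l m k
    have e : (fun y => christoffel g l m k y) = fun y => (1/2) * ∑ σ, (g y)⁻¹ l σ *
        (pd (fun z => g z σ k) m y + pd (fun z => g z σ m) k y - pd (fun z => g z m k) σ y) := rfl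
    rw [e]
    exact contDiffAt_const.mul (ContDiffAt.sum fun σ _ => (cGi l σ).mul
      (((cpdg m σ k).add (cpdg k σ m)).sub (cpdg σ m k)))
  have cN : ∀ l m k, ContDiffAt ℝ (⊤ : ℕ∞) (fun y => schN g π l m k y) x := by
    intro l m k
    have e : (fun y => schN g π l m k y) = fun y => -(piUp g π l y) * g y m k
        + (1/2) * π y k * (if l = m then (1:ℝ) else 0)
        + (1/2) * π y m * (if l = k then (1:ℝ) else 0) := rfl
    rw [e]
    exact (((cPU l).neg.mul (cg m k)).add
        ((contDiffAt_const.mul (cπ k)).mul contDiffAt_const)).add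
      ((contDiffAt_const.mul (cπ m)).mul contDiffAt_const)
  -- pointwise matrix facts at x
  have hAx : ∀ a b, g x a b = g x b a := fun a b => ((hsymm x hx).apply a b).symm
  have hBx : ∀ a b, (g x)⁻¹ a b = (g x)⁻¹ b a := by
    intro a b
    have h1 : Matrix.transpose ((g x)⁻¹) = (g x)⁻¹ := by
      rw [Matrix.transpose_nonsing_inv, (hsymm x hx).eq]
    calc (g x)⁻¹ a b = Matrix.transpose ((g x)⁻¹) b a :=
          (Matrix.transpose_apply ((g x)⁻¹) b a).symm
      _ = (g x)⁻¹ b a := by rw [h1]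
  have hABx : ∀ a b, ∑ c, g x a c * (g x)⁻¹ c b = if a = b then (1:ℝ) else 0 := by
    intro a b
    have h1 := Matrix.mul_nonsing_inv (g x) (hinv x hx)
    calc ∑ c, g x a c * (g x)⁻¹ c b = (g x * (g x)⁻¹) a b := (Matrix.mul_apply).symm
      _ = (1 : Matrix (Fin 4) (Fin 4) ℝ) a b := by rw [h1]
      _ = if a = b then 1 else 0 := Matrix.one_apply
  have hdGx : ∀ (μ a b : Fin 4), pd (fun y => g y a b) μ x = pd (fun y => g y b a) μ x := by
    intro μ a b
    refine pd_congr ?_ μ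
    filter_upwards [hxU] with y hy
    exact ((hsymm y hy).apply a b).symm
  -- derivative of the inverse metric
  have key : ∀ (a b μ : Fin 4), (∑ c, (g x)⁻¹ a c * pd (fun z => g z c b) μ x)
      + ∑ c, g x c b * pd (fun y => (g y)⁻¹ a c) μ x = 0 := by
    intro a b μ
    have hconst : (fun y => ∑ c, (g y)⁻¹ a c * g y c b) =ᶠ[𝓝 x]
        (fun _ => if a = b then (1:ℝ) else 0) := by
      filter_upwards [hxU] with y hy
      have h1 := Matrix.nonsing_inv_mul (g y) (hinv y hy)
      calc ∑ c, (g y)⁻¹ a c * g y c b = ((g y)⁻¹ * g y) a b := (Matrix.mul_apply).symm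
        _ = (1 : Matrix (Fin 4) (Fin 4) ℝ) a b := by rw [h1]
        _ = if a = b then 1 else 0 := Matrix.one_apply
    have h0 : pd (fun y => ∑ c, (g y)⁻¹ a c * g y c b) μ x = 0 := by
      rw [pd_congr hconst μ, pd_const]
    rw [pd_sum Finset.univ (fun c y => (g y)⁻¹ a c * g y c b)
      (fun c _ => (D (cGi a c)).mul (D (cg c b))) μ] at h0
    have h2 : ∀ c : Fin 4, pd (fun y => (g y)⁻¹ a c * g y c b) μ x
        = (g x)⁻¹ a c * pd (fun z => g z c b) μ x
          + g x c b * pd (fun y => (g y)⁻¹ a c) μ x :=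
      fun c => pd_mul (D (cGi a c)) (D (cg c b)) μ
    rw [Finset.sum_congr rfl fun c _ => h2 c, Finset.sum_add_distrib] at h0
    exact h0
  have pdinv : ∀ (μ a b : Fin 4), pd (fun y => (g y)⁻¹ a b) μ x
      = -∑ c, ∑ d, (g x)⁻¹ a c * pd (fun z => g z c d) μ x * (g x)⁻¹ d b := by
    intro μ a b
    have hrel : ∀ e : Fin 4, ∑ c, g x c e * pd (fun y => (g y)⁻¹ a c) μ x
        = -∑ c, (g x)⁻¹ a c * pd (fun z => g z c e) μ x := by
      intro e; have h := key a e μ; linarith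
    calc pd (fun y => (g y)⁻¹ a b) μ x
        = ∑ c, pd (fun y => (g y)⁻¹ a c) μ x * (if c = b then (1:ℝ) else 0) := by
          simp [mul_ite, Finset.sum_ite_eq']
      _ = ∑ c, pd (fun y => (g y)⁻¹ a c) μ x * (∑ e, g x c e * (g x)⁻¹ e b) :=
          Finset.sum_congr rfl fun c _ => by rw [hABx c b]
      _ = ∑ c, ∑ e, pd (fun y => (g y)⁻¹ a c) μ x * (g x c e * (g x)⁻¹ e b) :=
          Finset.sum_congr rfl fun c _ => Finset.mul_sum _ _ _
      _ = ∑ e, ∑ c, pd (fun y => (g y)⁻¹ a c) μ x * (g x c e * (g x)⁻¹ e b) :=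
          Finset.sum_comm
      _ = ∑ e, (∑ c, g x c e * pd (fun y => (g y)⁻¹ a c) μ x) * (g x)⁻¹ e b := by
          refine Finset.sum_congr rfl fun e _ => ?_
          rw [Finset.sum_mul]
          exact Finset.sum_congr rfl fun c _ => by ring
      _ = ∑ e, (-∑ c, (g x)⁻¹ a c * pd (fun z => g z c e) μ x) * (g x)⁻¹ e b :=
          Finset.sum_congr rfl fun e _ => by rw [hrel e]
      _ = -∑ c, ∑ d, (g x)⁻¹ a c * pd (fun z => g z c d) μ x * (g x)⁻¹ d b := by
          rw [Finset.sum_congr rfl fun e (_ : e ∈ Finset.univ) =>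
              (neg_mul (∑ c, (g x)⁻¹ a c * pd (fun z => g z c e) μ x) ((g x)⁻¹ e b)),
            Finset.sum_neg_distrib,
            Finset.sum_congr rfl fun e (_ : e ∈ Finset.univ) =>
              (Finset.sum_mul Finset.univ (fun c => (g x)⁻¹ a c * pd (fun z => g z c e) μ x)
                ((g x)⁻¹ e b)),
            Finset.sum_comm]
  -- derivative of piUp
  have hpdPU : ∀ (μ l : Fin 4), pd (fun y => piUp g π l y) μ x
      = ∑ σ, ((g x)⁻¹ l σ * pd (fun y => π y σ) μ x
          + π x σ * pd (fun y => (g y)⁻¹ l σ) μ x) := by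
    intro μ l
    have e : (fun y => piUp g π l y) = fun y => ∑ σ, (g y)⁻¹ l σ * π y σ := rfl
    rw [e, pd_sum Finset.univ (fun σ y => (g y)⁻¹ l σ * π y σ)
      (fun σ _ => (D (cGi l σ)).mul (D (cπ σ))) μ]
    exact Finset.sum_congr rfl fun σ _ => pd_mul (D (cGi l σ)) (D (cπ σ)) μ
  -- derivative of schN
  have hpdN : ∀ (μ l m k : Fin 4), pd (fun y => schN g π l m k y) μ x
      = dN (g x) ((g x)⁻¹) (π x) (fun μ' a b => pd (fun y => g y a b) μ' x)
          (fun μ' a => pd (fun y => π y a) μ' x) μ l m k := by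
    intro μ l m k
    have e : (fun y => schN g π l m k y) = fun y =>
        (-(piUp g π l y) * g y m k + (1/2) * π y k * (if l = m then (1:ℝ) else 0))
          + (1/2) * π y m * (if l = k then (1:ℝ) else 0) := rfl
    rw [e]
    rw [pd_add (((D (cPU l)).fun_neg.fun_mul (D (cg m k))).fun_add
        (((differentiableAt_const _).fun_mul (D (cπ k))).fun_mul (differentiableAt_const _)))
      (((differentiableAt_const _).fun_mul (D (cπ m))).fun_mul (differentiableAt_const _)) μ]
    rw [pd_add ((D (cPU l)).fun_neg.fun_mul (D (cg m k)))
      (((differentiableAt_const _).fun_mul (D (cπ k))).fun_mul (differentiableAt_const _)) μ]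
    rw [pd_mul ((D (cPU l)).fun_neg) (D (cg m k)) μ]
    rw [pd_mul ((differentiableAt_const _).fun_mul (D (cπ k))) (differentiableAt_const _) μ]
    rw [pd_mul ((differentiableAt_const _).fun_mul (D (cπ m))) (differentiableAt_const _) μ]
    rw [pd_neg μ, hpdPU μ l]
    rw [pd_const, pd_const, pd_cmul (1/2) (D (cπ k)) μ, pd_cmul (1/2) (D (cπ m)) μ]
    simp only [pdinv]
    have flip : ∑ σ, ((g x)⁻¹ l σ * pd (fun y => π y σ) μ x
        + π x σ * -∑ c, ∑ d, (g x)⁻¹ l c * pd (fun z => g z c d) μ x * (g x)⁻¹ d σ)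
        = ∑ σ, ((-∑ c, ∑ d, (g x)⁻¹ l c * pd (fun z => g z c d) μ x * (g x)⁻¹ d σ) * π x σ
          + (g x)⁻¹ l σ * pd (fun y => π y σ) μ x) :=
      Finset.sum_congr rfl fun σ _ => by ring
    rw [flip]
    simp only [dN, PUa]
    have hPUx : piUp g π l x = ∑ σ, (g x)⁻¹ l σ * π x σ := rfl
    rw [hPUx]
    ring
  -- pointwise identification of christoffel and schN at x
  have hchr_eq : ∀ l m k : Fin 4, christoffel g l m k x
      = gam ((g x)⁻¹) (fun μ' a b => pd (fun y => g y a b) μ' x) l m k := fun _ _ _ => rfl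
  have hN_eq : ∀ l m k : Fin 4, schN g π l m k x
      = Nt (g x) ((g x)⁻¹) (π x) l m k := fun _ _ _ => rfl
  have hPUeq : ∀ s : Fin 4, piUp g π s x = PUa ((g x)⁻¹) (π x) s := fun _ => rfl
  -- splitting the derivatives of the total connection
  have hsplit1 : ∀ l : Fin 4,
      pd (fun y => christoffel g l ρ ν y + schN g π l ρ ν y) l x
        = pd (fun y => christoffel g l ρ ν y) l x + pd (fun y => schN g π l ρ ν y) l x :=
    fun l => pd_add (D (cChr l ρ ν)) (D (cN l ρ ν)) l
  have hsplit2 : ∀ l : Fin 4,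
      pd (fun y => christoffel g l ρ l y + schN g π l ρ l y) ν x
        = pd (fun y => christoffel g l ρ l y) ν x + pd (fun y => schN g π l ρ l y) ν x :=
    fun l => pd_add (D (cChr l ρ l)) (D (cN l ρ l)) ν
  simp only [ricci, covDiv, covd, piSq]
  simp only [hsplit1, hsplit2, hpdN, hchr_eq, hN_eq, hPUeq]
  simp only [Finset.sum_add_distrib]
  -- expand the quadratic terms
  have hexp1 : ∑ l, ∑ s, (gam ((g x)⁻¹) (fun μ' a b => pd (fun y => g y a b) μ' x) l s l
        + Nt (g x) ((g x)⁻¹) (π x) l s l)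
      * (gam ((g x)⁻¹) (fun μ' a b => pd (fun y => g y a b) μ' x) s ρ ν
        + Nt (g x) ((g x)⁻¹) (π x) s ρ ν)
      = (∑ l, ∑ s, gam ((g x)⁻¹) (fun μ' a b => pd (fun y => g y a b) μ' x) l s l
          * gam ((g x)⁻¹) (fun μ' a b => pd (fun y => g y a b) μ' x) s ρ ν)
        + (∑ l, ∑ s, gam ((g x)⁻¹) (fun μ' a b => pd (fun y => g y a b) μ' x) l s l
          * Nt (g x) ((g x)⁻¹) (π x) s ρ ν)
        + (∑ l, ∑ s, Nt (g x) ((g x)⁻¹) (π x) l s l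
          * gam ((g x)⁻¹) (fun μ' a b => pd (fun y => g y a b) μ' x) s ρ ν)
        + (∑ l, ∑ s, Nt (g x) ((g x)⁻¹) (π x) l s l
          * Nt (g x) ((g x)⁻¹) (π x) s ρ ν) := by
    rw [Finset.sum_congr rfl fun l (_ : l ∈ Finset.univ) =>
      Finset.sum_congr rfl fun s _ => (by ring :
        (gam ((g x)⁻¹) (fun μ' a b => pd (fun y => g y a b) μ' x) l s l
            + Nt (g x) ((g x)⁻¹) (π x) l s l)
          * (gam ((g x)⁻¹) (fun μ' a b => pd (fun y => g y a b) μ' x) s ρ ν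
            + Nt (g x) ((g x)⁻¹) (π x) s ρ ν)
        = gam ((g x)⁻¹) (fun μ' a b => pd (fun y => g y a b) μ' x) l s l
            * gam ((g x)⁻¹) (fun μ' a b => pd (fun y => g y a b) μ' x) s ρ ν
          + gam ((g x)⁻¹) (fun μ' a b => pd (fun y => g y a b) μ' x) l s l
            * Nt (g x) ((g x)⁻¹) (π x) s ρ ν
          + Nt (g x) ((g x)⁻¹) (π x) l s l
            * gam ((g x)⁻¹) (fun μ' a b => pd (fun y => g y a b) μ' x) s ρ ν
          + Nt (g x) ((g x)⁻¹) (π x) l s l * Nt (g x) ((g x)⁻¹) (π x) s ρ ν)]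
    simp only [Finset.sum_add_distrib]
  have hexp2 : ∑ l, ∑ s, (gam ((g x)⁻¹) (fun μ' a b => pd (fun y => g y a b) μ' x) l s ν
        + Nt (g x) ((g x)⁻¹) (π x) l s ν)
      * (gam ((g x)⁻¹) (fun μ' a b => pd (fun y => g y a b) μ' x) s ρ l
        + Nt (g x) ((g x)⁻¹) (π x) s ρ l)
      = (∑ l, ∑ s, gam ((g x)⁻¹) (fun μ' a b => pd (fun y => g y a b) μ' x) l s ν
          * gam ((g x)⁻¹) (fun μ' a b => pd (fun y => g y a b) μ' x) s ρ l)
        + (∑ l, ∑ s, gam ((g x)⁻¹) (fun μ' a b => pd (fun y => g y a b) μ' x) l s ν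
          * Nt (g x) ((g x)⁻¹) (π x) s ρ l)
        + (∑ l, ∑ s, Nt (g x) ((g x)⁻¹) (π x) l s ν
          * gam ((g x)⁻¹) (fun μ' a b => pd (fun y => g y a b) μ' x) s ρ l)
        + (∑ l, ∑ s, Nt (g x) ((g x)⁻¹) (π x) l s ν
          * Nt (g x) ((g x)⁻¹) (π x) s ρ l) := by
    rw [Finset.sum_congr rfl fun l (_ : l ∈ Finset.univ) =>
      Finset.sum_congr rfl fun s _ => (by ring :
        (gam ((g x)⁻¹) (fun μ' a b => pd (fun y => g y a b) μ' x) l s ν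
            + Nt (g x) ((g x)⁻¹) (π x) l s ν)
          * (gam ((g x)⁻¹) (fun μ' a b => pd (fun y => g y a b) μ' x) s ρ l
            + Nt (g x) ((g x)⁻¹) (π x) s ρ l)
        = gam ((g x)⁻¹) (fun μ' a b => pd (fun y => g y a b) μ' x) l s ν
            * gam ((g x)⁻¹) (fun μ' a b => pd (fun y => g y a b) μ' x) s ρ l
          + gam ((g x)⁻¹) (fun μ' a b => pd (fun y => g y a b) μ' x) l s ν
            * Nt (g x) ((g x)⁻¹) (π x) s ρ l
          + Nt (g x) ((g x)⁻¹) (π x) l s ν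
            * gam ((g x)⁻¹) (fun μ' a b => pd (fun y => g y a b) μ' x) s ρ l
          + Nt (g x) ((g x)⁻¹) (π x) l s ν * Nt (g x) ((g x)⁻¹) (π x) s ρ l)]
    simp only [Finset.sum_add_distrib]
  rw [hexp1, hexp2]
  linear_combination main_algebra (P := π x) (dP := fun μ' a => pd (fun y => π y a) μ' x) hABx hAx hBx hdGx ρ ν
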